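/- For each k ≥ 1 and q ≥ 2, with λ_k = 1/((k-1/2)π)² and φ_k(s) = √2 sin(s/√λ_k), the (q−1)-fold iterated integral ∫_0^r ∫_0^{s_{q-1}} ⋯ ∫_0^{s_2} φ_k(s_1) ds_1 ⋯ ds_{q-1} equals √2 [ ∑_{ℓ=1}^{⌊q/2⌋} (−1)^{ℓ−1} λ_k^{ℓ−1/2} r^{q−2ℓ}/(q−2ℓ)! + λ_k^{(q−1)/2} Im((−i)^{q−1} e^{ir/√λ_k}) ] for all r ∈ [0,1]. In particular for q = 2 it equals √2 λ_k^{1/2} (1 − cos(r/√λ_k)). -/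
import Mathlib

open Real Finset intervalIntegral

/-- λ_k = 1/((k - 1/2)² π²). -/
noncomputable def klLam (k : ℕ) : ℝ := 1 / (((k : ℝ) - 1/2)^2 * Real.pi^2)

/-- φ_k(s) = √2 sin(s/√λ_k). -/
noncomputable def klPhi (k : ℕ) (s : ℝ) : ℝ :=
  Real.sqrt 2 * Real.sin (s / Real.sqrt (klLam k))

/-- `iterInt j f` is the j-fold iterated integral `r ↦ ∫_0^r ⋯ ∫_0^{s_2} f(s_1) ds_1 ⋯`. -/
noncomputable def iterInt : ℕ → (ℝ → ℝ) → (ℝ → ℝ)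
  | 0, f => f
  | (j + 1), f => fun r => ∫ s in (0:ℝ)..r, iterInt j f s

lemma klLam_pos (k : ℕ) : 0 < klLam k := by
  unfold klLam
  have h1 : ((k:ℝ) - 1/2) ≠ 0 := by
    rcases Nat.eq_zero_or_pos k with h | h
    · subst h; norm_num
    · have : (1:ℝ) ≤ (k:ℝ) := by exact_mod_cast h
      intro hcon; linarith
  have := Real.pi_pos
  positivity

lemma int_sin_div (c : ℝ) (hc : c ≠ 0) (r : ℝ) :
    ∫ s in (0:ℝ)..r, Real.sin (s / c) = c * (1 - Real.cos (r / c)) := by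
  rw [intervalIntegral.integral_comp_div (f := Real.sin) hc, integral_sin]
  simp [smul_eq_mul]

lemma int_cos_div (c : ℝ) (hc : c ≠ 0) (r : ℝ) :
    ∫ s in (0:ℝ)..r, Real.cos (s / c) = c * Real.sin (r / c) := by
  rw [intervalIntegral.integral_comp_div (f := Real.cos) hc, integral_cos]
  simp [smul_eq_mul]

lemma I_mul_div (r c : ℝ) :
    Complex.I * (r:ℂ) / (c:ℂ) = ((r/c : ℝ) : ℂ) * Complex.I := by
  push_cast; ring

lemma im_z_exp (z : ℂ) (r c : ℝ) :
    (z * Complex.exp (Complex.I * r / c)).im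
      = z.re * Real.sin (r/c) + z.im * Real.cos (r/c) := by
  rw [I_mul_div, Complex.mul_im, Complex.exp_ofReal_mul_I_re, Complex.exp_ofReal_mul_I_im]

lemma int_im (z : ℂ) (c : ℝ) (hc : 0 < c) (r : ℝ) :
    ∫ s in (0:ℝ)..r, (z * Complex.exp (Complex.I * s / c)).im
      = c * ((-Complex.I * z) * Complex.exp (Complex.I * r / c)).im
        - c * (-Complex.I * z).im := by
  have hrw : ∀ s : ℝ, (z * Complex.exp (Complex.I * s / c)).im
      = z.re * Real.sin (s/c) + z.im * Real.cos (s/c) := fun s => im_z_exp z s c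
  simp_rw [hrw]
  rw [intervalIntegral.integral_add
        ((Continuous.intervalIntegrable (by fun_prop) _ _))
        ((Continuous.intervalIntegrable (by fun_prop) _ _)),
      intervalIntegral.integral_const_mul, intervalIntegral.integral_const_mul,
      int_sin_div c hc.ne' r, int_cos_div c hc.ne' r, im_z_exp]
  simp [Complex.mul_re, Complex.mul_im]
  ring

noncomputable def klF (k q : ℕ) (r : ℝ) : ℝ :=
  Real.sqrt 2 *
    ((∑ l ∈ Finset.Icc 1 (q / 2),
        (-1 : ℝ)^(l - 1) * (klLam k) ^ ((l : ℝ) - 1/2)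
          * r^(q - 2*l) / (Nat.factorial (q - 2*l) : ℝ))
      + (klLam k) ^ (((q : ℝ) - 1)/2) *
          ((-Complex.I)^(q - 1)
            * Complex.exp (Complex.I * r / Real.sqrt (klLam k))).im)

lemma klF_one (k : ℕ) (r : ℝ) : klF k 1 r = klPhi k r := by
  rw [klF, klPhi, I_mul_div]
  have him : (Complex.exp (((r / Real.sqrt (klLam k) : ℝ) : ℂ) * Complex.I)).im
      = Real.sin (r / Real.sqrt (klLam k)) := Complex.exp_ofReal_mul_I_im _
  push_cast at him
  norm_num [him]

lemma klF_step (k q : ℕ) (r : ℝ) :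
    (∫ s in (0:ℝ)..r, klF k (q+1) s) = klF k (q+2) r := by
  have hlam : 0 < klLam k := klLam_pos k
  simp only [klF]
  rw [show q + 1 - 1 = q from rfl, show q + 2 - 1 = q + 1 from rfl,
    show ((q+1:ℕ):ℝ) = (q:ℝ)+1 from by push_cast; ring,
    show ((q+2:ℕ):ℝ) = (q:ℝ)+2 from by push_cast; ring]
  set lam := klLam k with hlamdef
  set c := Real.sqrt lam with hcdef
  have hc : 0 < c := Real.sqrt_pos.mpr hlam
  rw [intervalIntegral.integral_const_mul]
  congr 1
  have cS : Continuous (fun s : ℝ => ∑ l ∈ Finset.Icc 1 ((q+1)/2),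
      (-1:ℝ)^(l-1) * lam ^ ((l:ℝ) - 1/2) * s^(q+1-2*l) / ((q+1-2*l).factorial : ℝ)) :=
    continuous_finset_sum _ (fun l _ => by fun_prop)
  have cT : Continuous (fun s : ℝ => lam ^ ((((q:ℝ)+1) - 1)/2) *
      ((-Complex.I)^q * Complex.exp (Complex.I * s / c)).im) := by fun_prop
  rw [intervalIntegral.integral_add (cS.intervalIntegrable _ _) (cT.intervalIntegrable _ _)]
  -- the sum part
  have hSum : (∫ s in (0:ℝ)..r, ∑ l ∈ Finset.Icc 1 ((q+1)/2),
      (-1:ℝ)^(l-1) * lam ^ ((l:ℝ) - 1/2) * s^(q+1-2*l) / ((q+1-2*l).factorial : ℝ))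
      = ∑ l ∈ Finset.Icc 1 ((q+1)/2),
      (-1:ℝ)^(l-1) * lam ^ ((l:ℝ) - 1/2) * r^(q+2-2*l) / ((q+2-2*l).factorial : ℝ) := by
    rw [intervalIntegral.integral_finset_sum
      (fun l _ => (Continuous.intervalIntegrable (by fun_prop) _ _))]
    refine Finset.sum_congr rfl (fun l hl => ?_)
    simp only [Finset.mem_Icc] at hl
    have h2l : 2*l ≤ q+1 := by omega
    have hm2 : q+2-2*l = (q+1-2*l)+1 := by omega
    set m := q+1-2*l with hm
    have hre : (fun s : ℝ => (-1:ℝ)^(l-1) * lam ^ ((l:ℝ) - 1/2) * s^m / (m.factorial : ℝ))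
        = fun s : ℝ => ((-1:ℝ)^(l-1) * lam ^ ((l:ℝ) - 1/2) / (m.factorial : ℝ)) * s^m := by
      funext s; ring
    rw [hre, intervalIntegral.integral_const_mul, integral_pow, hm2, Nat.factorial_succ,
      zero_pow (Nat.succ_ne_zero m), sub_zero, Nat.cast_mul, div_mul_div_comm]
    congr 1
    push_cast
    ring
  -- the oscillatory part
  have hT : (∫ s in (0:ℝ)..r, lam ^ ((((q:ℝ)+1) - 1)/2) *
      ((-Complex.I)^q * Complex.exp (Complex.I * s / c)).im)
      = lam ^ ((((q:ℝ)+2) - 1)/2) *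
          ((-Complex.I)^(q+1) * Complex.exp (Complex.I * r / c)).im
        - lam ^ ((((q:ℝ)+2) - 1)/2) * ((-Complex.I)^(q+1)).im := by
    rw [intervalIntegral.integral_const_mul, int_im _ c hc r]
    have hpow : -Complex.I * (-Complex.I)^q = (-Complex.I)^(q+1) := by
      rw [pow_succ]; ring
    rw [hpow]
    have hec : lam ^ ((((q:ℝ)+1) - 1)/2) * c = lam ^ ((((q:ℝ)+2) - 1)/2) := by
      rw [hcdef, Real.sqrt_eq_rpow, ← Real.rpow_add hlam]
      congr 1; ring
    rw [← hec]
    ring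
  rw [hSum, hT]
  -- remaining: sum identity by parity
  have him : ∑ l ∈ Finset.Icc 1 ((q+2)/2),
        (-1:ℝ)^(l-1) * lam ^ ((l:ℝ) - 1/2) * r^(q+2-2*l) / ((q+2-2*l).factorial : ℝ)
      = (∑ l ∈ Finset.Icc 1 ((q+1)/2),
        (-1:ℝ)^(l-1) * lam ^ ((l:ℝ) - 1/2) * r^(q+2-2*l) / ((q+2-2*l).factorial : ℝ))
        - lam ^ ((((q:ℝ)+2) - 1)/2) * ((-Complex.I)^(q+1)).im := by
    rcases Nat.even_or_odd q with ⟨m, hm⟩ | ⟨m, hm⟩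
    · -- q = m + m even : extra term appears
      have h1 : (q+1)/2 = m := by omega
      have h2 : (q+2)/2 = m+1 := by omega
      rw [h1, h2, Finset.sum_Icc_succ_top (Nat.one_le_iff_ne_zero.mpr (Nat.succ_ne_zero m))]
      have hIq : (-Complex.I)^(q+1) = (((-1:ℝ)^m : ℝ) : ℂ) * (-Complex.I) := by
        rw [hm, show m + m + 1 = 2*m + 1 from by ring, pow_succ, pow_mul, neg_sq,
          Complex.I_sq]
        push_cast; ring
      have hIim : ((-Complex.I)^(q+1)).im = -(-1:ℝ)^m := by
        rw [hIq, Complex.mul_im, Complex.ofReal_re, Complex.ofReal_im]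
        simp
      rw [hIim]
      have hz : q + 2 - 2*(m+1) = 0 := by omega
      rw [hz]
      have he1 : ((m+1:ℕ):ℝ) - 1/2 = (((q:ℝ)+2) - 1)/2 := by
        push_cast
        rw [hm]; push_cast; ring
      rw [he1]
      simp [Nat.factorial]
      ring
    · -- q = 2m+1 odd : Im term vanishes
      have h1 : (q+1)/2 = m+1 := by omega
      have h2 : (q+2)/2 = m+1 := by omega
      have hIq : (-Complex.I)^(q+1) = (((-1:ℝ)^(m+1) : ℝ) : ℂ) := by
        rw [hm, show 2*m + 1 + 1 = 2*(m+1) from by ring, pow_mul, neg_sq, Complex.I_sq]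
        push_cast; ring
      have hIim : ((-Complex.I)^(q+1)).im = 0 := by rw [hIq, Complex.ofReal_im]
      rw [h1, h2, hIim]
      ring
  rw [him]
  ring

/-- For `k ≥ 1` and `q ≥ 2`, the (q−1)-fold iterated integral of φ_k equals
`√2 [∑_{ℓ=1}^{⌊q/2⌋} (−1)^{ℓ−1} λ_k^{ℓ−1/2} r^{q−2ℓ}/(q−2ℓ)!
  + λ_k^{(q−1)/2} Im((−i)^{q−1} e^{ir/√λ_k})]` on `[0,1]`;
in particular for `q = 2` it equals `√2 √λ_k (1 − cos(r/√λ_k))`. -/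
theorem iterInt_klPhi (k q : ℕ) (hk : 1 ≤ k) (hq : 2 ≤ q) :
    (∀ r ∈ Set.Icc (0:ℝ) 1,
      iterInt (q - 1) (klPhi k) r
        = Real.sqrt 2 *
          ((∑ l ∈ Finset.Icc 1 (q / 2),
              (-1 : ℝ)^(l - 1) * (klLam k) ^ ((l : ℝ) - 1/2)
                * r^(q - 2*l) / (Nat.factorial (q - 2*l) : ℝ))
            + (klLam k) ^ (((q : ℝ) - 1)/2) *
                ((-Complex.I)^(q - 1)
                  * Complex.exp (Complex.I * r / Real.sqrt (klLam k))).im))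
    ∧ (q = 2 → ∀ r ∈ Set.Icc (0:ℝ) 1,
        iterInt 1 (klPhi k) r
          = Real.sqrt 2 * Real.sqrt (klLam k)
              * (1 - Real.cos (r / Real.sqrt (klLam k)))) := by
  have key : ∀ n : ℕ, ∀ r : ℝ, iterInt n (klPhi k) r = klF k (n+1) r := by
    intro n
    induction n with
    | zero => intro r; exact (klF_one k r).symm
    | succ n ih =>
      intro r
      show (∫ s in (0:ℝ)..r, iterInt n (klPhi k) s) = _
      simp_rw [ih]
      exact klF_step k n r
  constructor
  · intro r _
    have h := key (q-1) r
    rw [Nat.sub_add_cancel (by omega)] at h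
    rw [h, klF]
  · rintro rfl r _
    rw [key 1 r, klF, show Finset.Icc 1 (2/2) = {1} from rfl, Finset.sum_singleton,
      I_mul_div]
    have him : ((-Complex.I) * Complex.exp (((r / Real.sqrt (klLam k) : ℝ) : ℂ)
        * Complex.I)).im = -Real.cos (r / Real.sqrt (klLam k)) := by
      rw [Complex.mul_im, Complex.exp_ofReal_mul_I_re, Complex.exp_ofReal_mul_I_im]
      simp
    rw [show ((2:ℕ) - 1) = 1 from rfl, pow_one, him]
    rw [show (((1:ℕ):ℝ) - 1/2) = 1/2 by norm_num,
      show (((2:ℕ):ℝ) - 1)/2 = 1/2 by norm_num, ← Real.sqrt_eq_rpow]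
    norm_num [Nat.factorial]
    ring
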